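/- Let G be a commutative group, F a field, φ : ℤ[G] → F a ring homomorphism, H_1, …, H_k subgroups of G, and n a natural number. Consider the ℤ[G]-module M = ℤ[G]^n ⊕ ℤ[G/H_1] ⊕ ⋯ ⊕ ℤ[G/H_k], where each ℤ[G/H_i] is a ℤ[G]-module via the quotient homomorphism G → G/H_i. Then the F-vector space F ⊗_{ℤ[G]} M has dimension n + |{i ∈ {1,…,k} : φ(h) = 1 for all h ∈ H_i}|, and a basis is given by the images of the n standard free generators together with the elements (identity coset of G/H_i) ⊗ 1 for those indices i with φ trivial on H_i. -/

import Mathlib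

/-!
Base change along `ℤ[G] → F` commutes with finite products, and `F ⊗ ℤ[G]ⁿ ≅ Fⁿ`. The module
`ℤ[G/H]` is cyclic over `ℤ[G]`, generated by the identity coset. If `φ` is trivial on `H`, it
descends to a functional `ℤ[G/H] → F` sending that generator to `1`, and then
`F ⊗ ℤ[G/H] ≅ F`. Otherwise some `h ∈ H` acts trivially on `ℤ[G/H]` but by `φ h ≠ 1` on `F`,
which forces `F ⊗ ℤ[G/H] = 0`.
-/

open scoped TensorProduct

noncomputable instance quotGroupRingModule {G : Type*} [CommGroup G] (H : Subgroup G) :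
    Module (MonoidAlgebra ℤ G) (MonoidAlgebra ℤ (G ⧸ H)) :=
  Module.compHom _ (MonoidAlgebra.mapDomainRingHom ℤ (QuotientGroup.mk' H))

namespace TensorProduct

variable {R F N : Type*} [CommSemiring R] [AddCommMonoid N] [Module R N]

theorem subsingleton_of_smul_eq_self [Field F] [Algebra R F] {r : R} (hr : ∀ x : N, r • x = x)
    (hr₁ : algebraMap R F r ≠ 1) : Subsingleton (F ⊗[R] N) := by
  have hfix : ∀ t : F ⊗[R] N, algebraMap R F r • t = t := fun t => by
    induction t using TensorProduct.induction_on with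
    | zero => exact smul_zero _
    | tmul c x => rw [algebraMap_smul, ← tmul_smul, hr]
    | add t t' ht ht' => rw [smul_add, ht, ht']
  refine subsingleton_of_forall_eq 0 fun t => ?_
  by_contra ht
  exact hr₁ (smul_left_injective F ht (show algebraMap R F r • t = (1 : F) • t by
    rw [hfix, one_smul]))

variable [CommSemiring F] [Algebra R F]

noncomputable def basisOfSpanSingleton (ι : Type*) [Unique ι] {x₀ : N}
    (hx₀ : Submodule.span R {x₀} = ⊤) (ψ : N →ₗ[R] F) (hψ : ψ x₀ = 1) :
    Module.Basis ι F (F ⊗[R] N) :=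
  (Module.Basis.singleton ι F).map <| LinearEquiv.symm <|
    LinearEquiv.ofLinearMap (ψ.liftBaseChange F) (LinearMap.toSpanSingleton F _ (1 ⊗ₜ x₀))
      (by ext; simp [hψ])
      (by
        refine TensorProduct.AlgebraTensorModule.ext fun c x => ?_
        obtain ⟨r, rfl⟩ := Submodule.mem_span_singleton.mp (hx₀ ▸ Submodule.mem_top : x ∈ _)
        simp [hψ, smul_tmul'])

theorem basisOfSpanSingleton_apply (ι : Type*) [Unique ι] {x₀ : N}
    (hx₀ : Submodule.span R {x₀} = ⊤) (ψ : N →ₗ[R] F) (hψ : ψ x₀ = 1) (i : ι) :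
    basisOfSpanSingleton ι hx₀ ψ hψ i = 1 ⊗ₜ x₀ := by
  simp [basisOfSpanSingleton]

end TensorProduct

namespace MonoidAlgebra

theorem mapDomainRingHom_surjective {R M N : Type*} [Semiring R] [Monoid M] [Monoid N]
    {f : M →* N} (hf : Function.Surjective f) :
    Function.Surjective (mapDomainRingHom R f) := fun x => by
  obtain ⟨y, hy⟩ := Finsupp.mapDomain_surjective hf x.coeff
  exact ⟨ofCoeff y, by rw [mapDomainRingHom_apply, mapDomain, hy]⟩

variable {G : Type*} [CommGroup G] (H : Subgroup G)

theorem quotGroupRing_smul_def (r : MonoidAlgebra ℤ G) (x : MonoidAlgebra ℤ (G ⧸ H)) :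
    r • x = mapDomainRingHom ℤ (QuotientGroup.mk' H) r * x := rfl

theorem span_of_one_quotGroupRing :
    Submodule.span (MonoidAlgebra ℤ G) {of ℤ (G ⧸ H) 1} = ⊤ := by
  refine Submodule.eq_top_iff'.mpr fun x => Submodule.mem_span_singleton.mpr ?_
  obtain ⟨r, rfl⟩ := mapDomainRingHom_surjective (QuotientGroup.mk'_surjective H) x
  exact ⟨r, by rw [quotGroupRing_smul_def, map_one, mul_one]⟩

theorem of_smul_quotGroupRing_of_mem {h : G} (hh : h ∈ H) (x : MonoidAlgebra ℤ (G ⧸ H)) :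
    of ℤ G h • x = x := by
  rw [quotGroupRing_smul_def, mapDomainRingHom_apply, of_apply, mapDomain_single,
    QuotientGroup.mk'_apply, (QuotientGroup.eq_one_iff h).mpr hh, ← one_def, one_mul]

variable {F : Type*} [Field F] [Algebra (MonoidAlgebra ℤ G) F]

noncomputable def quotGroupRingLift (hH : ∀ h ∈ H, algebraMap _ F (of ℤ G h) = 1) :
    MonoidAlgebra ℤ (G ⧸ H) →+* F :=
  lift ℤ F (G ⧸ H) <| QuotientGroup.lift H
    ((algebraMap (MonoidAlgebra ℤ G) F : MonoidAlgebra ℤ G →* F).comp (of ℤ G))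
    fun h hh => by simpa using hH h hh

theorem quotGroupRingLift_comp_mapDomainRingHom (hH : ∀ h ∈ H, algebraMap _ F (of ℤ G h) = 1) :
    (quotGroupRingLift H hH).comp (mapDomainRingHom ℤ (QuotientGroup.mk' H)) =
      algebraMap _ F := by
  ext g
  · exact RingHom.congr_fun (RingHom.ext_int _ _) _
  · simp [quotGroupRingLift]

noncomputable def quotGroupRingLinearLift (hH : ∀ h ∈ H, algebraMap _ F (of ℤ G h) = 1) :
    MonoidAlgebra ℤ (G ⧸ H) →ₗ[MonoidAlgebra ℤ G] F where
  toFun := quotGroupRingLift H hH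
  map_add' := map_add _
  map_smul' r x := by
    rw [quotGroupRing_smul_def, map_mul, ← RingHom.comp_apply,
      quotGroupRingLift_comp_mapDomainRingHom, RingHom.id_apply, Algebra.smul_def]

theorem quotGroupRingLinearLift_of_one (hH : ∀ h ∈ H, algebraMap _ F (of ℤ G h) = 1) :
    quotGroupRingLinearLift H hH (of ℤ (G ⧸ H) 1) = 1 := by
  rw [map_one]
  exact map_one (quotGroupRingLift H hH)

open Classical in
/-- Indexed by `PLift` of the triviality condition, so that it is the one-element basis `1 ⊗ 1`
when `F` is trivial on `H` and the empty basis otherwise. -/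
noncomputable def basisTensorQuotGroupRing :
    Module.Basis (PLift (∀ h ∈ H, algebraMap _ F (of ℤ G h) = 1)) F
      (F ⊗[MonoidAlgebra ℤ G] MonoidAlgebra ℤ (G ⧸ H)) :=
  if hH : ∀ h ∈ H, algebraMap _ F (of ℤ G h) = 1 then
    letI : Unique (PLift _) := ⟨⟨⟨hH⟩⟩, fun _ => rfl⟩
    TensorProduct.basisOfSpanSingleton _ (span_of_one_quotGroupRing H)
      (quotGroupRingLinearLift H hH) (quotGroupRingLinearLift_of_one H hH)
  else
    haveI : IsEmpty (PLift _) := ⟨fun h => hH h.down⟩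
    haveI : Subsingleton (F ⊗[MonoidAlgebra ℤ G] MonoidAlgebra ℤ (G ⧸ H)) := by
      push Not at hH
      obtain ⟨h, hh, hh₁⟩ := hH
      exact TensorProduct.subsingleton_of_smul_eq_self (of_smul_quotGroupRing_of_mem H hh) hh₁
    Module.Basis.empty _

theorem basisTensorQuotGroupRing_apply (i : PLift (∀ h ∈ H, algebraMap _ F (of ℤ G h) = 1)) :
    basisTensorQuotGroupRing H i = (1 : F) ⊗ₜ of ℤ (G ⧸ H) 1 := by
  rw [basisTensorQuotGroupRing, dif_pos i.down, TensorProduct.basisOfSpanSingleton_apply]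

end MonoidAlgebra

/-- Lemma 4.4 of the paper (algebraic content): for the `ℤ[G]`-module
`M = ℤ[G]ⁿ ⊕ ℤ[G/H₁] ⊕ ⋯ ⊕ ℤ[G/H_k]`, the `F`-vector space `F ⊗_{ℤ[G]} M` has dimension
`n + #{i : φ trivial on H i}`, with basis given by the images of the `n` standard free
generators together with the elements `(identity coset of G/H_i) ⊗ 1` for the indices `i`
with `φ` trivial on `H i`. -/
theorem stmt3 {G : Type*} [CommGroup G] {F : Type*} [Field F]
    (φ : MonoidAlgebra ℤ G →+* F) (n k : ℕ) (H : Fin k → Subgroup G) :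
    letI : Algebra (MonoidAlgebra ℤ G) F := φ.toAlgebra
    Module.finrank F (F ⊗[MonoidAlgebra ℤ G]
        ((Fin n → MonoidAlgebra ℤ G) × (∀ i : Fin k, MonoidAlgebra ℤ (G ⧸ H i))))
      = n + Nat.card {i : Fin k // ∀ h ∈ H i, φ (MonoidAlgebra.of ℤ G h) = 1} ∧
    ∃ b : Module.Basis (Fin n ⊕ {i : Fin k // ∀ h ∈ H i, φ (MonoidAlgebra.of ℤ G h) = 1}) F
        (F ⊗[MonoidAlgebra ℤ G]
          ((Fin n → MonoidAlgebra ℤ G) × (∀ i : Fin k, MonoidAlgebra ℤ (G ⧸ H i)))),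
      (∀ j : Fin n, b (Sum.inl j) = (1 : F) ⊗ₜ[MonoidAlgebra ℤ G]
        ((Pi.single j (1 : MonoidAlgebra ℤ G), 0) :
          (Fin n → MonoidAlgebra ℤ G) × (∀ i : Fin k, MonoidAlgebra ℤ (G ⧸ H i)))) ∧
      (∀ i : {i : Fin k // ∀ h ∈ H i, φ (MonoidAlgebra.of ℤ G h) = 1},
        b (Sum.inr i) = (1 : F) ⊗ₜ[MonoidAlgebra ℤ G]
          ((0, Pi.single i.1 (MonoidAlgebra.of ℤ (G ⧸ H i.1) (1 : G ⧸ H i.1))) :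
            (Fin n → MonoidAlgebra ℤ G) × (∀ i : Fin k, MonoidAlgebra ℤ (G ⧸ H i)))) := by
  let _ : Algebra (MonoidAlgebra ℤ G) F := φ.toAlgebra
  let e := (TensorProduct.prodRight (MonoidAlgebra ℤ G) F F (Fin n → MonoidAlgebra ℤ G)
      (∀ i, MonoidAlgebra ℤ (G ⧸ H i))).trans <| (LinearEquiv.refl F _).prodCongr <|
    TensorProduct.piRight (MonoidAlgebra ℤ G) F F fun i => MonoidAlgebra ℤ (G ⧸ H i)
  let σ := Equiv.sigmaPLiftEquivSubtype fun i => ∀ h ∈ H i, φ (MonoidAlgebra.of ℤ G h) = 1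
  let b := ((((Pi.basisFun (MonoidAlgebra ℤ G) (Fin n)).baseChange F).prod
      (Pi.basis fun i => MonoidAlgebra.basisTensorQuotGroupRing (H i) (F := F))).reindex
      ((Equiv.refl _).sumCongr σ)).map e.symm
  refine ⟨?_, b, fun j => ?_, fun i => ?_⟩
  · rw [Module.finrank_eq_nat_card_basis b, Nat.card_sum, Nat.card_fin]
  · rw [Module.Basis.map_apply, LinearEquiv.symm_apply_eq]
    simp [e]
  · rw [Module.Basis.map_apply, LinearEquiv.symm_apply_eq]
    have hσ : σ.symm i = ⟨i.1, ⟨i.2⟩⟩ := rfl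
    simp [e, hσ, MonoidAlgebra.basisTensorQuotGroupRing_apply, TensorProduct.tmul_single]
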